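/- arXiv:2509.21616 — 6 statements merged into one kernel-verified Lean document; each statement's English description precedes it below -/
import Mathlib

section
/- Let S be a Polish space and let c : S × S → [0,∞) satisfy: (a) c(x,x) = 0 for all x ∈ S; (b) c(x,z) ≤ c(x,y) + c(y,z) for all x, y, z ∈ S; (c) there exists a sequence of lower semicontinuous functions c_n : S × S → [0,∞) with c_n ↓ c pointwise as n → ∞. Then for all Borel probability measures μ, ν on S, sup{ ∫ φ dμ + ∫ ψ dν : φ, ψ : S → ℝ bounded Borel measurable with φ(x) + ψ(y) ≤ c(x,y) for all x, y ∈ S } = sup{ ∫ φ dμ − ∫ φ dν : φ : S → ℝ bounded Borel measurable with φ(x) − φ(y) ≤ c(x,y) for all x, y ∈ S }. -/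
/-!
Each single potential `φ` yields the admissible pair `(φ, -φ)`, so only `≤` needs an argument.
Given a bounded admissible pair `(φ, ψ)`, Lusin's theorem provides a compact set `Z` of almost
full `μ`-measure on which `φ` is continuous. The `c`-transform `h y = ⨅ z ∈ Z, c (z, y) - φ z`
then satisfies `ψ ≤ h`, `h ≤ -φ` on `Z` (as `c` vanishes on the diagonal) and
`h y ≤ h x + c (x, y)` (triangle inequality), so `-h`, truncated, is a single potential whose
value is at least that of `(φ, ψ)` up to a multiple of `μ Zᶜ`. The lower semicontinuous
approximants give measurability of `h`: it is the infimum over `n` of the `cₙ`-transforms, each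
lower semicontinuous because `Z` is compact.
-/

open MeasureTheory Set Filter Topology

theorem Measurable.exists_isCompact_continuousOn {X Y : Type*} [t : TopologicalSpace X]
    [PolishSpace X] [MeasurableSpace X] [hX : BorelSpace X] [TopologicalSpace Y]
    [SecondCountableTopology Y] [MeasurableSpace Y] [OpensMeasurableSpace Y]
    (μ : Measure X) [IsFiniteMeasure μ] {f : X → Y} (hf : Measurable f) {ε : ENNReal}
    (hε : ε ≠ 0) : ∃ K, IsCompact K ∧ μ Kᶜ < ε ∧ ContinuousOn f K := by
  suffices h : ∃ K, μ Kᶜ < ε ∧ ∀ C : Set Y, IsClosed C → IsCompact (f ⁻¹' C ∩ K) by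
    obtain ⟨K, hKμ, hK⟩ := h
    refine ⟨K, by simpa using hK univ isClosed_univ, hKμ, continuousOn_iff_isClosed.2 fun C hC =>
      ⟨f ⁻¹' C ∩ K, (hK C hC).isClosed, by rw [inter_assoc, inter_self]⟩⟩
  -- Pass to a finer Polish topology `t'` making `f` continuous: it has the same Borel sets, and
  -- its compact sets are compact for the original topology.
  obtain ⟨t', ht't, hft', hpolish'⟩ := hf.exists_continuous
  have : @BorelSpace X t' _ :=
    ⟨hX.measurable_eq.trans (borel_eq_borel_of_le hpolish' ‹_› ht't).symm⟩
  obtain ⟨K, -, hK, hKμ⟩ := MeasurableSet.univ.exists_isCompact_sdiff_lt (measure_ne_top μ _) hε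
  refine ⟨K, by rwa [← compl_eq_univ_sdiff] at hKμ, fun C hC => ?_⟩
  simpa using @IsCompact.image X X t' t _ id (hK.inter_left (hC.preimage hft'))
    (continuous_id_of_le ht't)

theorem exists_nonempty_isCompact_continuousOn {X Y : Type*} [TopologicalSpace X]
    [PolishSpace X] [MeasurableSpace X] [BorelSpace X] [TopologicalSpace Y]
    [SecondCountableTopology Y] [MeasurableSpace Y] [OpensMeasurableSpace Y]
    (μ : Measure X) [IsProbabilityMeasure μ] {f : X → Y} (hf : Measurable f) {δ : ℝ}
    (hδ : 0 < δ) : ∃ K, K.Nonempty ∧ IsCompact K ∧ μ.real Kᶜ < δ ∧ ContinuousOn f K := by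
  obtain ⟨K, hK, hKμ, hfK⟩ :=
    hf.exists_isCompact_continuousOn μ (ε := ENNReal.ofReal (min δ 1)) (by simp [hδ])
  have hKδ : μ.real Kᶜ < min δ 1 := ENNReal.toReal_lt_of_lt_ofReal hKμ
  refine ⟨K, nonempty_iff_ne_empty.2 ?_, hK, hKδ.trans_le (min_le_left _ _), hfK⟩
  rintro rfl
  simp [probReal_univ] at hKδ

theorem lowerSemicontinuous_ciInf_of_compactSpace {X K δ : Type*} [TopologicalSpace X]
    [TopologicalSpace K] [CompactSpace K] [Nonempty K] [ConditionallyCompleteLinearOrder δ]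
    [DenselyOrdered δ] [TopologicalSpace δ] [OrderTopology δ] {f : X × K → δ}
    (hf : LowerSemicontinuous f) : LowerSemicontinuous fun x => ⨅ k, f (x, k) := by
  intro x a ha
  obtain ⟨b, hab, hb⟩ := exists_between ha
  have hbdd : BddBelow (range fun k => f (x, k)) := by
    simpa [image_univ] using ((hf.comp (Continuous.prodMk_right x)).lowerSemicontinuousOn
      univ).bddBelow_of_isCompact isCompact_univ
  have hnear : ∀ᶠ x' in 𝓝 x, ∀ k ∈ univ, b < f (x', k) :=
    isCompact_univ.eventually_forall_of_forall_eventually fun k _ =>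
      hf (x, k) b (hb.trans_le (ciInf_le hbdd k))
  filter_upwards [hnear] with x' hx'
  exact hab.trans_le (le_ciInf fun k => (hx' k trivial).le)

noncomputable def cTransformOn {X : Type*} (c : X × X → ℝ) (Z : Set X) (φ : X → ℝ) (y : X) : ℝ :=
  ⨅ z : Z, (c (z, y) - φ z)

section CTransform

variable {X : Type*} {c : X × X → ℝ} {Z : Set X} {φ : X → ℝ}

theorem bddBelow_range_cost_sub (hc : ∀ p, 0 ≤ c p) (hφ : BddAbove (φ '' Z)) (y : X) :
    BddBelow (range fun z : Z => c (z, y) - φ z) := by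
  obtain ⟨M, hM⟩ := hφ
  refine ⟨-M, forall_mem_range.2 fun z => ?_⟩
  linarith [hc (z, y), hM (mem_image_of_mem φ z.2)]

theorem cTransformOn_le {y z : X} (hbdd : BddBelow (range fun z : Z => c (z, y) - φ z))
    (hz : z ∈ Z) : cTransformOn c Z φ y ≤ c (z, y) - φ z :=
  ciInf_le hbdd ⟨z, hz⟩

theorem le_cTransformOn [Nonempty Z] {a : ℝ} {y : X} (h : ∀ z ∈ Z, φ z + a ≤ c (z, y)) :
    a ≤ cTransformOn c Z φ y :=
  le_ciInf fun z => by linarith [h z z.2]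

theorem cTransformOn_le_neg {x : X} (hdiag : c (x, x) = 0)
    (hbdd : BddBelow (range fun z : Z => c (z, x) - φ z)) (hx : x ∈ Z) :
    cTransformOn c Z φ x ≤ -φ x := by
  simpa [hdiag] using cTransformOn_le hbdd hx

theorem cTransformOn_le_add [Nonempty Z] (htri : ∀ x y z, c (x, z) ≤ c (x, y) + c (y, z))
    {x y : X} (hbdd : BddBelow (range fun z : Z => c (z, y) - φ z)) :
    cTransformOn c Z φ y ≤ cTransformOn c Z φ x + c (x, y) := by
  rw [← sub_le_iff_le_add]
  refine le_cTransformOn fun z hz => ?_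
  linarith [cTransformOn_le hbdd hz, htri z x y]

theorem cTransformOn_eq_iInf_of_tendsto [Nonempty Z] (hc : ∀ p, 0 ≤ c p)
    (hφ : BddAbove (φ '' Z)) {cn : ℕ → X × X → ℝ} (hanti : ∀ p, Antitone fun n => cn n p)
    (hlim : ∀ p, Tendsto (fun n => cn n p) atTop (𝓝 (c p))) (y : X) :
    cTransformOn c Z φ y = ⨅ n, cTransformOn (cn n) Z φ y := by
  have hc_le : ∀ n p, c p ≤ cn n p := fun n p => (hanti p).le_of_tendsto (hlim p) n
  have hbdd_n : ∀ n, BddBelow (range fun z : Z => cn n (z, y) - φ z) := fun n =>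
    bddBelow_range_cost_sub (fun p => (hc p).trans (hc_le n p)) hφ y
  have hle_n : ∀ n, cTransformOn c Z φ y ≤ cTransformOn (cn n) Z φ y := fun n =>
    ciInf_mono (bddBelow_range_cost_sub hc hφ y) fun z => sub_le_sub_right (hc_le n _) _
  refine le_antisymm (le_ciInf hle_n) (le_ciInf fun z => ?_)
  refine ge_of_tendsto ((hlim _).sub_const _) (Eventually.of_forall fun n => ?_)
  exact (ciInf_le ⟨_, forall_mem_range.2 hle_n⟩ n).trans (cTransformOn_le (hbdd_n n) z.2)

theorem measurable_cTransformOn [TopologicalSpace X] [MeasurableSpace X] [OpensMeasurableSpace X]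
    [Nonempty Z] (hZ : IsCompact Z) (hφ : ContinuousOn φ Z) (hc : ∀ p, 0 ≤ c p)
    {cn : ℕ → X × X → ℝ} (hcn : ∀ n, LowerSemicontinuous (cn n))
    (hanti : ∀ p, Antitone fun n => cn n p)
    (hlim : ∀ p, Tendsto (fun n => cn n p) atTop (𝓝 (c p))) :
    Measurable (cTransformOn c Z φ) := by
  have : CompactSpace Z := isCompact_iff_compactSpace.1 hZ
  have hsemicont (n : ℕ) : LowerSemicontinuous (cTransformOn (cn n) Z φ) := by
    refine lowerSemicontinuous_ciInf_of_compactSpace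
      (f := fun p : X × Z => cn n (p.2, p.1) - φ p.2) ?_
    simp_rw [sub_eq_add_neg]
    exact ((hcn n).comp (by fun_prop)).add
      (hφ.domRestrict.comp continuous_snd).neg.lowerSemicontinuous
  rw [funext (cTransformOn_eq_iInf_of_tendsto hc (hZ.bddAbove_image hφ) hanti hlim)]
  exact Measurable.iInf fun n => (hsemicont n).measurable

end CTransform

theorem integral_le_integral_add_of_le_on {X : Type*} [MeasurableSpace X] {μ : Measure X}
    [IsFiniteMeasure μ] {f g : X → ℝ} {Z : Set X} {M : ℝ} (hZ : MeasurableSet Z)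
    (hf : Integrable f μ) (hg : Integrable g μ) (hfM : ∀ x, f x ≤ M) (hgM : ∀ x, -M ≤ g x)
    (hfg : ∀ x ∈ Z, f x ≤ g x) : ∫ x, f x ∂μ ≤ ∫ x, g x ∂μ + 2 * M * μ.real Zᶜ := by
  have hind : Integrable (Zᶜ.indicator fun _ => 2 * M) μ :=
    (integrable_const _).indicator hZ.compl
  have hpt (x : X) : f x ≤ g x + Zᶜ.indicator (fun _ => 2 * M) x := by
    by_cases hx : x ∈ Z
    · simpa [hx] using hfg x hx
    · simp only [indicator_of_mem (mem_compl hx)]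
      linarith [hfM x, hgM x]
  calc ∫ x, f x ∂μ ≤ ∫ x, g x + Zᶜ.indicator (fun _ => 2 * M) x ∂μ :=
        integral_mono hf (hg.add hind) hpt
    _ = ∫ x, g x ∂μ + 2 * M * μ.real Zᶜ := by
        rw [integral_add hg hind, integral_indicator_const _ hZ.compl, smul_eq_mul, mul_comm]

theorem integrable_of_abs_le {X : Type*} [MeasurableSpace X] {μ : Measure X} [IsFiniteMeasure μ]
    {f : X → ℝ} {M : ℝ} (hf : Measurable f) (hM : ∀ x, |f x| ≤ M) : Integrable f μ :=
  .of_bound hf.aestronglyMeasurable M (.of_forall hM)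

theorem exists_cLipschitz_le_integral_sub {S : Type*} [TopologicalSpace S] [PolishSpace S]
    [MeasurableSpace S] [BorelSpace S] {c : S × S → ℝ} (hc : ∀ p, 0 ≤ c p)
    (hdiag : ∀ x, c (x, x) = 0) (htri : ∀ x y z, c (x, z) ≤ c (x, y) + c (y, z))
    {cn : ℕ → S × S → ℝ} (hcn : ∀ n, LowerSemicontinuous (cn n))
    (hanti : ∀ p, Antitone fun n => cn n p)
    (hlim : ∀ p, Tendsto (fun n => cn n p) atTop (𝓝 (c p)))
    (μ ν : Measure S) [IsProbabilityMeasure μ] [IsProbabilityMeasure ν] {φ ψ : S → ℝ}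
    (hφ : Measurable φ) (hψ : Measurable ψ) {M : ℝ} (hφM : ∀ x, |φ x| ≤ M)
    (hψM : ∀ x, |ψ x| ≤ M) (hadm : ∀ x y, φ x + ψ y ≤ c (x, y)) {ε : ℝ} (hε : 0 < ε) :
    ∃ g : S → ℝ, Measurable g ∧ (∀ x, |g x| ≤ M) ∧ (∀ x y, g x - g y ≤ c (x, y)) ∧
      ∫ x, φ x ∂μ + ∫ y, ψ y ∂ν ≤ ∫ x, g x ∂μ - ∫ x, g x ∂ν + ε := by
  have hM : 0 ≤ M := (abs_nonneg _).trans (hφM (nonempty_of_isProbabilityMeasure μ).some)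
  obtain ⟨Z, hZne, hZ, hZμ, hφZ⟩ :=
    exists_nonempty_isCompact_continuousOn μ hφ (δ := ε / (2 * M + 1)) (by positivity)
  have : Nonempty Z := hZne.to_subtype
  have hbdd : ∀ y, BddBelow (range fun z : Z => c (z, y) - φ z) :=
    bddBelow_range_cost_sub hc ⟨M, forall_mem_image.2 fun x _ => (abs_le.1 (hφM x)).2⟩
  set h : S → ℝ := fun y => min (cTransformOn c Z φ y) M
  have hψh (y : S) : ψ y ≤ h y :=
    le_min (le_cTransformOn fun z _ => hadm z y) (abs_le.1 (hψM y)).2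
  have hhM (y : S) : |h y| ≤ M :=
    abs_le.2 ⟨(abs_le.1 (hψM y)).1.trans (hψh y), min_le_right _ _⟩
  have hh : Measurable h :=
    (measurable_cTransformOn hZ hφZ hc hcn hanti hlim).min measurable_const
  have hφh : ∀ x ∈ Z, φ x ≤ -h x := fun x hx =>
    le_neg.2 ((min_le_left _ _).trans (cTransformOn_le_neg (hdiag x) (hbdd x) hx))
  refine ⟨fun x => -h x, hh.neg, fun x => by simpa using hhM x, fun x y => ?_, ?_⟩
  · calc -h x - -h y = min (cTransformOn c Z φ y) M - h x := by ring
      _ ≤ min (cTransformOn c Z φ x + c (x, y)) (M + c (x, y)) - h x :=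
        sub_le_sub_right (min_le_min (cTransformOn_le_add htri (hbdd y))
          (le_add_of_nonneg_right (hc _))) _
      _ = c (x, y) := by rw [min_add_add_right]; ring
  · have hν : ∫ y, ψ y ∂ν ≤ ∫ y, h y ∂ν := integral_mono (integrable_of_abs_le hψ hψM)
      (integrable_of_abs_le hh hhM) hψh
    have hμ : ∫ x, φ x ∂μ ≤ ∫ x, -h x ∂μ + 2 * M * μ.real Zᶜ :=
      integral_le_integral_add_of_le_on hZ.isClosed.measurableSet (integrable_of_abs_le hφ hφM)
        (integrable_of_abs_le hh hhM).neg (fun x => (abs_le.1 (hφM x)).2)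
        (fun x => neg_le_neg (abs_le.1 (hhM x)).2) hφh
    have hsmall : 2 * M * μ.real Zᶜ ≤ ε :=
      calc 2 * M * μ.real Zᶜ ≤ 2 * M * (ε / (2 * M + 1)) := by gcongr
        _ ≤ ε := by rw [mul_div_assoc', div_le_iff₀ (by positivity)]; nlinarith
    simp only [integral_neg] at hμ ⊢
    linarith

section SupComparison

variable {ι κ : Sort*} {f : ι → ℝ} {g : κ → ℝ}

theorem bddAbove_range_of_forall_le_add (hg : BddAbove (range g))
    (hfg : ∀ i, ∀ ε > 0, ∃ j, f i ≤ g j + ε) : BddAbove (range f) := by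
  obtain ⟨b, hb⟩ := hg
  refine ⟨b + 1, forall_mem_range.2 fun i => ?_⟩
  obtain ⟨j, hj⟩ := hfg i 1 one_pos
  exact hj.trans (add_le_add_left (hb (mem_range_self j)) 1)

theorem Real.iSup_le_iSup_of_forall_le_add [Nonempty ι] (hg : BddAbove (range g))
    (hfg : ∀ i, ∀ ε > 0, ∃ j, f i ≤ g j + ε) : ⨆ i, f i ≤ ⨆ j, g j := by
  refine ciSup_le fun i => le_of_forall_pos_le_add fun ε hε => ?_
  obtain ⟨j, hj⟩ := hfg i ε hε
  exact hj.trans (add_le_add_left (le_ciSup hg j) ε)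

theorem Real.iSup_eq_iSup_of_forall_le_add (hfg : ∀ i, ∀ ε > 0, ∃ j, f i ≤ g j + ε)
    (hgf : ∀ j, ∀ ε > 0, ∃ i, g j ≤ f i + ε) : ⨆ i, f i = ⨆ j, g j := by
  rcases isEmpty_or_nonempty ι with hι | hι
  · have : IsEmpty κ := ⟨fun j => hι.elim (hgf j 1 one_pos).choose⟩
    simp only [Real.iSup_of_isEmpty]
  have : Nonempty κ := ⟨(hfg hι.some 1 one_pos).choose⟩
  by_cases hg : BddAbove (range g)
  · exact le_antisymm (Real.iSup_le_iSup_of_forall_le_add hg hfg)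
      (Real.iSup_le_iSup_of_forall_le_add (bddAbove_range_of_forall_le_add hg hfg) hgf)
  · rw [Real.iSup_of_not_bddAbove hg,
      Real.iSup_of_not_bddAbove fun hf => hg (bddAbove_range_of_forall_le_add hf hgf)]

end SupComparison

/-- Reduction of the Kantorovich dual problem to one dual variable, for cost functions
that are non-increasing pointwise limits of lower semicontinuous functions, vanish on
the diagonal, and satisfy the triangle inequality. -/
theorem kantorovich_dual_one_variable
    {S : Type*} [TopologicalSpace S] [PolishSpace S] [MeasurableSpace S] [BorelSpace S]
    (c : S × S → ℝ) (hc0 : ∀ p, 0 ≤ c p)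
    (hdiag : ∀ x : S, c (x, x) = 0)
    (htri : ∀ x y z : S, c (x, z) ≤ c (x, y) + c (y, z))
    (hseq : ∃ cn : ℕ → S × S → ℝ, (∀ n, LowerSemicontinuous (cn n)) ∧
      (∀ n p, 0 ≤ cn n p) ∧ (∀ p, Antitone fun n => cn n p) ∧
      (∀ p, Filter.Tendsto (fun n => cn n p) Filter.atTop (nhds (c p))))
    (μ ν : Measure S) [IsProbabilityMeasure μ] [IsProbabilityMeasure ν] :
    (⨆ fp : {fp : (S → ℝ) × (S → ℝ) // Measurable fp.1 ∧ Measurable fp.2 ∧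
        (∃ M : ℝ, ∀ x, |fp.1 x| ≤ M) ∧ (∃ M : ℝ, ∀ x, |fp.2 x| ≤ M) ∧
        ∀ x y : S, fp.1 x + fp.2 y ≤ c (x, y)},
      (∫ x, fp.1.1 x ∂μ + ∫ y, fp.1.2 y ∂ν)) =
    ⨆ φ : {φ : S → ℝ // Measurable φ ∧ (∃ M : ℝ, ∀ x, |φ x| ≤ M) ∧
        ∀ x y : S, φ x - φ y ≤ c (x, y)},
      (∫ x, φ.1 x ∂μ - ∫ x, φ.1 x ∂ν) := by
  obtain ⟨cn, hcn, -, hanti, hlim⟩ := hseq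
  refine Real.iSup_eq_iSup_of_forall_le_add ?_ ?_
  · rintro ⟨⟨φ, ψ⟩, hφ, hψ, ⟨Mφ, hφM⟩, ⟨Mψ, hψM⟩, hadm⟩ ε hε
    obtain ⟨g, hg, hgM, hglip, hint⟩ := exists_cLipschitz_le_integral_sub hc0 hdiag htri hcn hanti
      hlim μ ν hφ hψ (fun x => (hφM x).trans (le_max_left Mφ Mψ))
      (fun x => (hψM x).trans (le_max_right Mφ Mψ)) hadm hε
    exact ⟨⟨g, hg, ⟨_, hgM⟩, hglip⟩, hint⟩
  · rintro ⟨φ, hφ, ⟨M, hφM⟩, hlip⟩ ε hε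
    refine ⟨⟨(φ, fun y => -φ y), hφ, hφ.neg, ⟨M, hφM⟩, ⟨M, by simpa using hφM⟩,
      fun x y => by linarith [hlip x y]⟩, ?_⟩
    simp only [integral_neg, ← sub_eq_add_neg]
    linarith
end

section
/- Let S be a Polish space and let c : S × S → [0,∞) satisfy c(x,x) = 0 for all x ∈ S, and suppose there is a sequence of lower semicontinuous functions c_n : S × S → [0,∞) with c_n ↓ c pointwise. Let g = Σ_{i=1}^r b_i 𝟏_{K_i}, where b_1, …, b_r ≥ 0 and K_1, …, K_r ⊆ S are pairwise disjoint compact sets. Then the c-transform g^c(x) := inf_{y ∈ S} (c(x,y) − g(y)) is Borel measurable. -/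
/-!
Since `c (x, x) = 0` and `g ≥ 0`, the transform is nonpositive, and a point `y` outside every
`K i` contributes `c (x, y) ≥ 0`; so `gᶜ x = min 0 (⨅ i, ⨅ y ∈ K i, c (x, y) - b i)`.
Each inner infimum is the countable infimum over `n` of `x ↦ ⨅ y ∈ K i, cₙ (x, y) - b i`,
and an infimum of a lower semicontinuous function over a compact set of the second variable
is again lower semicontinuous (tube lemma), hence Borel.
-/

open MeasureTheory Set Filter

theorem ciInf_comm_of_forall_le {α ι κ : Type*} [ConditionallyCompleteLattice α]
    [Nonempty ι] [Nonempty κ] {f : ι → κ → α} {B : α} (hB : ∀ i j, B ≤ f i j) :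
    ⨅ i, ⨅ j, f i j = ⨅ j, ⨅ i, f i j := by
  have hrow : ∀ i, BddBelow (range (f i)) := fun i => ⟨B, forall_mem_range.2 (hB i)⟩
  have hcol : ∀ j, BddBelow (range (f · j)) := fun j => ⟨B, forall_mem_range.2 (hB · j)⟩
  have hrowInf : BddBelow (range fun i => ⨅ j, f i j) :=
    ⟨B, forall_mem_range.2 fun i => le_ciInf (hB i)⟩
  have hcolInf : BddBelow (range fun j => ⨅ i, f i j) :=
    ⟨B, forall_mem_range.2 fun j => le_ciInf (hB · j)⟩
  exact le_antisymm
    (le_ciInf fun j => le_ciInf fun i => (ciInf_le hrowInf i).trans (ciInf_le (hrow i) j))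
    (le_ciInf fun i => le_ciInf fun j => (ciInf_le hcolInf j).trans (ciInf_le (hcol j) i))

section InfOverCompact

variable {X Y : Type*} [TopologicalSpace X] [TopologicalSpace Y]

theorem LowerSemicontinuous.iInf_isCompact {f : X × Y → ℝ} (hf : LowerSemicontinuous f)
    {K : Set Y} (hK : IsCompact K) : LowerSemicontinuous fun x => ⨅ y : K, f (x, y) := by
  rcases K.eq_empty_or_nonempty with rfl | hne
  · simpa using lowerSemicontinuous_const
  have := hne.to_subtype
  intro x₀ t ht
  obtain ⟨t', htt', ht'⟩ := exists_between ht
  have hbdd : BddBelow (range fun y : K => f (x₀, y)) := by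
    have := ((hf.comp (Continuous.prodMk_right x₀)).lowerSemicontinuousOn K)
      |>.bddBelow_of_isCompact hK
    rwa [image_eq_range] at this
  have hslice : {x₀} ×ˢ K ⊆ f ⁻¹' Ioi t' := by
    rintro ⟨x, y⟩ ⟨rfl, hy⟩
    exact ht'.trans_le (ciInf_le hbdd ⟨y, hy⟩)
  obtain ⟨U, V, hU, -, hx₀U, hKV, hUV⟩ :=
    generalized_tube_lemma isCompact_singleton hK (hf.isOpen_preimage t') hslice
  filter_upwards [hU.mem_nhds (hx₀U rfl)] with x hx
  exact htt'.trans_le (le_ciInf fun y => (hUV ⟨hx, hKV y.2⟩).le)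

theorem measurable_iInf_isCompact_of_antitone_tendsto [MeasurableSpace X] [OpensMeasurableSpace X]
    {F : X × Y → ℝ} {Fn : ℕ → X × Y → ℝ} (hlsc : ∀ n, LowerSemicontinuous (Fn n))
    (hmono : ∀ p, Antitone fun n => Fn n p) (hlim : ∀ p, Tendsto (Fn · p) atTop (nhds (F p)))
    {B : ℝ} (hB : ∀ p, B ≤ F p) {K : Set Y} (hK : IsCompact K) :
    Measurable fun x => ⨅ y : K, F (x, y) := by
  rcases K.eq_empty_or_nonempty with rfl | hne
  · simp
  have := hne.to_subtype
  have hF : ∀ p, ⨅ n, Fn n p = F p := fun p =>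
    (isGLB_of_tendsto_atTop (hmono p) (hlim p)).ciInf_eq
  have hFn : ∀ n p, B ≤ Fn n p := fun n p => (hB p).trans ((hmono p).le_of_tendsto (hlim p) n)
  have hswap : (fun x => ⨅ y : K, F (x, y)) = fun x => ⨅ n, ⨅ y : K, Fn n (x, y) := by
    funext x
    simp_rw [← hF]
    exact ciInf_comm_of_forall_le fun _ _ => hFn _ _
  rw [hswap]
  exact Measurable.iInf fun n => ((hlsc n).iInf_isCompact hK).measurable

end InfOverCompact

section SimpleFunction

variable {S ι : Type*} [Fintype ι] {b : ι → ℝ} {K : ι → Set S}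

theorem sum_indicator_apply_of_mem (hdisj : Pairwise (Function.onFun Disjoint K)) {i : ι} {y : S}
    (hy : y ∈ K i) : ∑ j, (K j).indicator (fun _ => b j) y = b i := by
  classical
  rw [Finset.sum_eq_single i (fun j _ hji => indicator_of_notMem
    (fun hyj => (hdisj hji).notMem_of_mem_left hyj hy) _) (by simp), indicator_of_mem hy]

theorem sum_indicator_nonneg (hb : ∀ i, 0 ≤ b i) (y : S) :
    0 ≤ ∑ j, (K j).indicator (fun _ => b j) y :=
  Finset.sum_nonneg fun j _ => indicator_nonneg (fun _ _ => hb j) y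

theorem sum_indicator_le_sum (hb : ∀ i, 0 ≤ b i) (y : S) :
    ∑ j, (K j).indicator (fun _ => b j) y ≤ ∑ j, b j :=
  Finset.sum_le_sum fun j _ => indicator_le_self' (fun _ _ => hb j) y

/-- For an empty `K i`, or for empty `ι`, the real infimum takes the junk value `0`, which the
outer `min 0` absorbs. -/
theorem iInf_sub_sum_indicator_eq (c : S × S → ℝ) (hc0 : ∀ p, 0 ≤ c p)
    (hdiag : ∀ x, c (x, x) = 0) (hb : ∀ i, 0 ≤ b i)
    (hdisj : Pairwise (Function.onFun Disjoint K)) (x : S) :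
    ⨅ y, (c (x, y) - ∑ j, (K j).indicator (fun _ => b j) y)
      = min 0 (⨅ i, ⨅ y : K i, (c (x, y) - b i)) := by
  have : Nonempty S := ⟨x⟩
  have hbdd : BddBelow (range fun y => c (x, y) - ∑ j, (K j).indicator (fun _ => b j) y) :=
    ⟨-∑ j, b j, forall_mem_range.2 fun y => by
      linarith [hc0 (x, y), sum_indicator_le_sum (K := K) hb y]⟩
  have hnonpos : ⨅ y, (c (x, y) - ∑ j, (K j).indicator (fun _ => b j) y) ≤ 0 :=
    ciInf_le_of_le hbdd x (by rw [hdiag, zero_sub, neg_nonpos]; exact sum_indicator_nonneg hb x)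
  have hinner : ∀ i, BddBelow (range fun y : K i => c (x, y) - b i) :=
    fun i => ⟨-b i, forall_mem_range.2 fun y => by linarith [hc0 (x, y)]⟩
  refine le_antisymm (le_min hnonpos (Real.le_iInf (fun i => ?_) hnonpos)) (le_ciInf fun y => ?_)
  · refine Real.le_iInf (fun y => (ciInf_le hbdd y).trans_eq ?_) hnonpos
    rw [sum_indicator_apply_of_mem hdisj y.2]
  by_cases hy : ∃ i, y ∈ K i
  · obtain ⟨i, hyi⟩ := hy
    rw [sum_indicator_apply_of_mem hdisj hyi]
    exact (min_le_right _ _).trans <| (ciInf_le (finite_range _).bddBelow i).trans <|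
      ciInf_le (hinner i) ⟨y, hyi⟩
  · rw [Finset.sum_eq_zero fun j _ => indicator_of_notMem (not_exists.1 hy j) _, sub_zero]
    exact (min_le_left _ _).trans (hc0 _)

end SimpleFunction

theorem cTransform_simple_compact_measurable_general
    {S : Type*} [TopologicalSpace S] [MeasurableSpace S] [BorelSpace S]
    (c : S × S → ℝ) (hc0 : ∀ p, 0 ≤ c p) (hdiag : ∀ x : S, c (x, x) = 0)
    (cn : ℕ → S × S → ℝ) (hlsc : ∀ n, LowerSemicontinuous (cn n))
    (hmono : ∀ p, Antitone fun n => cn n p)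
    (hlim : ∀ p, Filter.Tendsto (fun n => cn n p) Filter.atTop (nhds (c p)))
    (r : ℕ) (b : Fin r → ℝ) (hb : ∀ i, 0 ≤ b i)
    (K : Fin r → Set S) (hK : ∀ i, IsCompact (K i))
    (hdisj : Pairwise (Function.onFun Disjoint K))
    (g : S → ℝ) (hg : g = fun y => ∑ i, Set.indicator (K i) (fun _ => b i) y) :
    Measurable fun x : S => ⨅ y : S, (c (x, y) - g y) := by
  subst hg
  simp_rw [iInf_sub_sum_indicator_eq c hc0 hdiag hb hdisj]
  refine measurable_const.min (Measurable.iInf fun i => ?_)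
  have hlsc_sub : ∀ n, LowerSemicontinuous fun p => cn n p - b i := fun n =>
    (continuous_sub_right (b i)).comp_lowerSemicontinuous (hlsc n) fun _ _ h => sub_le_sub_right h _
  exact measurable_iInf_isCompact_of_antitone_tendsto hlsc_sub
    (fun p _ _ h => sub_le_sub_right (hmono p h) _) (fun p => (hlim p).sub_const _)
    (B := -b i) (fun p => by linarith [hc0 p]) (hK i)

/-- If `c` is a non-increasing pointwise limit of lower semicontinuous nonnegative
functions vanishing on the diagonal, and `g` is a nonnegative simple function built
from pairwise disjoint compact sets, then the `c`-transform of `g` is Borel measurable. -/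
theorem cTransform_simple_compact_measurable
    {S : Type*} [TopologicalSpace S] [PolishSpace S] [MeasurableSpace S] [BorelSpace S]
    (c : S × S → ℝ) (hc0 : ∀ p, 0 ≤ c p) (hdiag : ∀ x : S, c (x, x) = 0)
    (cn : ℕ → S × S → ℝ) (hlsc : ∀ n, LowerSemicontinuous (cn n))
    (hn0 : ∀ n p, 0 ≤ cn n p)
    (hmono : ∀ p, Antitone fun n => cn n p)
    (hlim : ∀ p, Filter.Tendsto (fun n => cn n p) Filter.atTop (nhds (c p)))
    (r : ℕ) (b : Fin r → ℝ) (hb : ∀ i, 0 ≤ b i)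
    (K : Fin r → Set S) (hK : ∀ i, IsCompact (K i))
    (hdisj : Pairwise (Function.onFun Disjoint K))
    (g : S → ℝ) (hg : g = fun y => ∑ i, Set.indicator (K i) (fun _ => b i) y) :
    Measurable fun x : S => ⨅ y : S, (c (x, y) - g y) :=
  cTransform_simple_compact_measurable_general c hc0 hdiag cn hlsc hmono hlim r b hb K hK hdisj g hg
end

section
/- Let S be a Polish space, let c : S × S → [0,∞) be a bounded Borel measurable function, and let μ, ν be Borel probability measures on S. Then the one-variable Kantorovich dual problem admits a maximizer: there exists a bounded Borel measurable φ : S → ℝ with φ(x) − φ(y) ≤ c(x,y) for all x, y ∈ S such that ∫ φ dμ − ∫ φ dν = sup{ ∫ φ' dμ − ∫ φ' dν : φ' : S → ℝ bounded Borel measurable with φ'(x) − φ'(y) ≤ c(x,y) for all x, y ∈ S }. -/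
/-!
Subtracting the constant `φ x₀` puts every admissible potential into the uniform ball
`|φ| ≤ sup c` without changing the objective, which is linear and bounded on that ball. The sets
of near-maximisers are then decreasing, nonempty, bounded and convex in the Hilbert space
`L²(μ + ν)`, so by the parallelogram law their almost-minimal-norm elements form a Cauchy
sequence. A subsequence converges `(μ + ν)`-a.e.; its pointwise `limsup` is again admissible and,
by dominated convergence, attains the supremum.
-/

open MeasureTheory Filter Topology

section InnerProductSpace

variable {E : Type*} [NormedAddCommGroup E] [InnerProductSpace ℝ E]

lemma norm_sub_sq_le_of_le_norm_midpoint_sq {v w : E} {d : ℝ}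
    (h : d ≤ ‖(1 / 2 : ℝ) • v + (1 / 2 : ℝ) • w‖ ^ 2) :
    ‖v - w‖ ^ 2 ≤ 2 * ‖v‖ ^ 2 + 2 * ‖w‖ ^ 2 - 4 * d := by
  have hmid : ‖(1 / 2 : ℝ) • v + (1 / 2 : ℝ) • w‖ = ‖v + w‖ / 2 := by
    rw [← smul_add, norm_smul]; norm_num; ring
  have hpar := parallelogram_law_with_norm ℝ v w
  rw [hmid] at h
  nlinarith

theorem exists_cauchySeq_mem_of_antitone_convex {K : ℕ → Set E} (hanti : Antitone K)
    (hconv : ∀ n, Convex ℝ (K n)) (hne : ∀ n, (K n).Nonempty) (hbdd : Bornology.IsBounded (K 0)) :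
    ∃ v : ℕ → E, (∀ n, v n ∈ K n) ∧ CauchySeq v := by
  set d : ℕ → ℝ := fun n => sInf ((‖·‖ ^ 2) '' K n)
  have hd_bddBelow : ∀ n, BddBelow ((‖·‖ ^ 2) '' K n) :=
    fun n => ⟨0, by rintro _ ⟨w, -, rfl⟩; positivity⟩
  have hd_le : ∀ n, ∀ w ∈ K n, d n ≤ ‖w‖ ^ 2 :=
    fun n w hw => csInf_le (hd_bddBelow n) ⟨w, hw, rfl⟩
  have hd_mono : Monotone d := fun n m hnm =>
    csInf_le_csInf (hd_bddBelow n) ((hne m).image _) (Set.image_mono (hanti hnm))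
  obtain ⟨B, hB⟩ := hbdd.exists_norm_le
  have hd_bddAbove : BddAbove (Set.range d) := ⟨B ^ 2, by
    rintro _ ⟨n, rfl⟩
    obtain ⟨w, hw⟩ := hne n
    exact (hd_le n w hw).trans (pow_le_pow_left₀ (norm_nonneg w) (hB w (hanti n.zero_le hw)) 2)⟩
  set D := ⨆ n, d n
  have hdD : ∀ n, d n ≤ D := le_ciSup hd_bddAbove
  have hv : ∀ n : ℕ, ∃ v ∈ K n, ‖v‖ ^ 2 < d n + 1 / (n + 1) := fun n => by
    obtain ⟨_, ⟨v, hv, rfl⟩, hlt⟩ := (csInf_lt_iff (hd_bddBelow n) ((hne n).image _)).1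
      (lt_add_of_pos_right (d n) Nat.one_div_pos_of_nat)
    exact ⟨v, hv, hlt⟩
  choose v hvK hv using hv
  have hdist : ∀ N n m : ℕ, N ≤ n → n ≤ m →
      ‖v n - v m‖ ^ 2 ≤ 2 * (D - d N) + 4 * (1 / (N + 1)) := by
    intro N n m hNn hnm
    have hmid := hd_le n _ ((hconv n) (hvK n) (hanti hnm (hvK m)) (by norm_num) (by norm_num)
      (add_halves (1 : ℝ)))
    have h1 : 1 / ((n : ℝ) + 1) ≤ 1 / (N + 1) := Nat.one_div_le_one_div hNn
    have h2 : 1 / ((m : ℝ) + 1) ≤ 1 / (N + 1) := Nat.one_div_le_one_div (hNn.trans hnm)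
    linarith [norm_sub_sq_le_of_le_norm_midpoint_sq hmid, hv n, hv m, hdD m, hd_mono hNn]
  refine ⟨v, hvK, cauchySeq_of_le_tendsto_0 (fun N => √(2 * (D - d N) + 4 * (1 / (N + 1))))
    (fun n m N hn hm => ?_) ?_⟩
  · rw [dist_eq_norm, ← abs_norm]
    apply Real.abs_le_sqrt
    rcases le_total n m with hnm | hmn
    · exact hdist N n m hn hnm
    · rw [norm_sub_rev]; exact hdist N m n hm hmn
  · have hlim : Tendsto (fun N : ℕ => 2 * (D - d N) + 4 * (1 / (N + 1))) atTop
        (𝓝 (2 * (D - D) + 4 * 0)) :=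
      ((tendsto_const_nhds.sub (tendsto_atTop_ciSup hd_mono hd_bddAbove)).const_mul 2).add
        (tendsto_one_div_add_atTop_nhds_zero_nat.const_mul 4)
    simpa using hlim.sqrt

end InnerProductSpace

namespace MeasureTheory.Lp

variable {α E : Type*} [MeasurableSpace α] {μ : Measure α} [NormedAddCommGroup E]
  {p : ENNReal}

theorem exists_subseq_ae_tendsto_of_cauchySeq [Fact (1 ≤ p)] [CompleteSpace E]
    {f : ℕ → Lp E p μ} (hf : CauchySeq f) :
    ∃ σ : ℕ → ℕ, StrictMono σ ∧ ∀ᵐ x ∂μ, ∃ l, Tendsto (fun k => f (σ k) x) atTop (𝓝 l) := by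
  obtain ⟨g, hg⟩ := cauchySeq_tendsto_of_complete hf
  obtain ⟨σ, hσ, hae⟩ := (tendstoInMeasure_of_tendsto_Lp hg).exists_seq_tendsto_ae
  exact ⟨σ, hσ, hae.mono fun x hx => ⟨g x, hx⟩⟩

theorem convex_setOf_exists_mem_ae_eq [NormedSpace ℝ E] {A : Set (α → E)} (hA : Convex ℝ A) :
    Convex ℝ {g : Lp E p μ | ∃ ψ ∈ A, g =ᵐ[μ] ψ} := by
  rintro g ⟨ψ, hψ, hgψ⟩ h ⟨χ, hχ, hhχ⟩ a b ha hb hab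
  refine ⟨a • ψ + b • χ, hA hψ hχ ha hb hab, ?_⟩
  filter_upwards [Lp.coeFn_add (a • g) (b • h), Lp.coeFn_smul a g, Lp.coeFn_smul b h, hgψ, hhχ]
    with x h1 h2 h3 h4 h5
  rw [h1, Pi.add_apply, h2, h3, Pi.smul_apply, Pi.smul_apply, h4, h5, Pi.add_apply]
  rfl

end MeasureTheory.Lp

section Admissible

variable {S : Type*} [MeasurableSpace S] (c : S × S → ℝ)

def IsAdmissible (φ : S → ℝ) : Prop :=
  Measurable φ ∧ (∃ M : ℝ, ∀ x, |φ x| ≤ M) ∧ ∀ x y : S, φ x - φ y ≤ c (x, y)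

def admissibleBall (M : ℝ) : Set (S → ℝ) :=
  {ψ | Measurable ψ ∧ (∀ x, |ψ x| ≤ M) ∧ ∀ x y : S, ψ x - ψ y ≤ c (x, y)}

noncomputable def dualObjective (μ ν : Measure S) (φ : S → ℝ) : ℝ :=
  ∫ x, φ x ∂μ - ∫ x, φ x ∂ν

variable {c} {M : ℝ} {μ ν : Measure S}

lemma integrable_of_mem_admissibleBall [IsFiniteMeasure μ] {ψ : S → ℝ}
    (hψ : ψ ∈ admissibleBall c M) : Integrable ψ μ :=
  Integrable.of_bound hψ.1.aestronglyMeasurable M (ae_of_all _ hψ.2.1)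

lemma isAdmissible_zero (hc : ∀ p, 0 ≤ c p) : IsAdmissible c 0 :=
  ⟨measurable_const, ⟨0, by simp⟩, fun x y => by simpa using hc (x, y)⟩

lemma IsAdmissible.of_mem_admissibleBall {ψ : S → ℝ} (hψ : ψ ∈ admissibleBall c M) :
    IsAdmissible c ψ :=
  ⟨hψ.1, ⟨M, hψ.2.1⟩, hψ.2.2⟩

lemma IsAdmissible.exists_mem_admissibleBall [IsProbabilityMeasure μ] [IsProbabilityMeasure ν]
    {φ : S → ℝ} (hφ : IsAdmissible c φ) (hcM : ∀ p, c p ≤ M) (x₀ : S) :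
    ∃ ψ ∈ admissibleBall c M, dualObjective μ ν ψ = dualObjective μ ν φ := by
  obtain ⟨hmeas, ⟨B, hB⟩, hfeas⟩ := hφ
  refine ⟨fun x => φ x - φ x₀, ⟨hmeas.sub_const _, fun x => abs_le.2 ⟨?_, ?_⟩, fun x y => ?_⟩, ?_⟩
  · linarith [hfeas x₀ x, hcM (x₀, x)]
  · linarith [hfeas x x₀, hcM (x, x₀)]
  · linarith [hfeas x y]
  · have hint : ∀ κ : Measure S, [IsProbabilityMeasure κ] →
        ∫ x, (φ x - φ x₀) ∂κ = ∫ x, φ x ∂κ - φ x₀ := fun κ _ => by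
      rw [integral_sub (Integrable.of_bound hmeas.aestronglyMeasurable B (ae_of_all _ hB))
        (integrable_const _), integral_const, probReal_univ, one_smul]
    simp only [dualObjective, hint]
    ring

lemma dualObjective_le_of_mem_admissibleBall [IsProbabilityMeasure μ] [IsProbabilityMeasure ν]
    {ψ : S → ℝ} (hψ : ψ ∈ admissibleBall c M) : dualObjective μ ν ψ ≤ 2 * M := by
  have hint : ∀ κ : Measure S, [IsProbabilityMeasure κ] → |∫ x, ψ x ∂κ| ≤ M := fun κ _ => by
    simpa using norm_integral_le_of_norm_le_const (μ := κ) (f := ψ)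
      (ae_of_all _ hψ.2.1)
  have hμ := (abs_le.1 (hint μ)).2
  have hν := (abs_le.1 (hint ν)).1
  rw [dualObjective]
  linarith

lemma concaveOn_dualObjective [IsFiniteMeasure μ] [IsFiniteMeasure ν] :
    ConcaveOn ℝ (admissibleBall c M) (dualObjective μ ν) := by
  refine ⟨?_, ?_⟩
  · rintro ψ ⟨hψm, hψb, hψc⟩ χ ⟨hχm, hχb, hχc⟩ a b ha hb hab
    refine ⟨(hψm.const_smul a).add (hχm.const_smul b), fun x => ?_, fun x y => ?_⟩
    · calc |a * ψ x + b * χ x| ≤ a * |ψ x| + b * |χ x| := by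
            simpa [abs_mul, abs_of_nonneg ha, abs_of_nonneg hb] using
              abs_add_le (a * ψ x) (b * χ x)
        _ ≤ a * M + b * M := by gcongr <;> simp_all
        _ = M := by rw [← add_mul, hab, one_mul]
    · have hψc' := mul_le_mul_of_nonneg_left (hψc x y) ha
      have hχc' := mul_le_mul_of_nonneg_left (hχc x y) hb
      have hc : c (x, y) = a * c (x, y) + b * c (x, y) := by rw [← add_mul, hab, one_mul]
      simp only [Pi.add_apply, Pi.smul_apply, smul_eq_mul]
      linarith
  · intro ψ hψ χ hχ a b _ _ _
    have hlin : ∀ κ : Measure S, [IsFiniteMeasure κ] →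
        ∫ x, (a • ψ + b • χ) x ∂κ = a * ∫ x, ψ x ∂κ + b * ∫ x, χ x ∂κ := fun κ _ => by
      simp only [Pi.add_apply, Pi.smul_apply, smul_eq_mul]
      rw [integral_add ((integrable_of_mem_admissibleBall hψ).const_mul a)
        ((integrable_of_mem_admissibleBall hχ).const_mul b), integral_const_mul, integral_const_mul]
    simp only [dualObjective, hlin, smul_eq_mul]
    linarith

lemma exists_mem_admissibleBall_ae_tendsto {κ : Measure S} {ψ : ℕ → S → ℝ}
    (hψ : ∀ k, ψ k ∈ admissibleBall c M)
    (hconv : ∀ᵐ x ∂κ, ∃ l, Tendsto (fun k => ψ k x) atTop (𝓝 l)) :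
    ∃ φ ∈ admissibleBall c M, ∀ᵐ x ∂κ, Tendsto (fun k => ψ k x) atTop (𝓝 (φ x)) := by
  have hle : ∀ k x, ψ k x ≤ M := fun k x => (abs_le.1 ((hψ k).2.1 x)).2
  have hge : ∀ k x, -M ≤ ψ k x := fun k x => (abs_le.1 ((hψ k).2.1 x)).1
  have hbdd : ∀ x, IsBoundedUnder (· ≤ ·) atTop fun k => ψ k x :=
    fun x => isBoundedUnder_of ⟨M, fun k => hle k x⟩
  have hcobdd : ∀ x, IsCoboundedUnder (· ≤ ·) atTop fun k => ψ k x :=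
    fun x => isCoboundedUnder_le_of_le atTop (hge · x)
  refine ⟨fun x => limsup (fun k => ψ k x) atTop,
    ⟨Measurable.limsup fun k => (hψ k).1, fun x => abs_le.2 ⟨?_, ?_⟩, fun x y => ?_⟩, ?_⟩
  · exact le_limsup_of_frequently_le (Frequently.of_forall (hge · x)) (hbdd x)
  · exact limsup_le_of_le (hcobdd x) (Eventually.of_forall (hle · x))
  · have hshift : IsBoundedUnder (· ≤ ·) atTop fun k => ψ k y + c (x, y) :=
      isBoundedUnder_of ⟨M + c (x, y), fun k => by linarith [hle k y]⟩
    have hlimsup := limsup_le_limsup (Eventually.of_forall fun k => by linarith [(hψ k).2.2 x y])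
      (hcobdd x) hshift
    rw [limsup_add_const atTop _ _ (hbdd y) (hcobdd y)] at hlimsup
    linarith
  · filter_upwards [hconv] with x ⟨l, hl⟩
    rwa [hl.limsup_eq]

lemma tendsto_dualObjective [IsFiniteMeasure μ] [IsFiniteMeasure ν] {ψ : ℕ → S → ℝ}
    {φ : S → ℝ} (hmeas : ∀ k, Measurable (ψ k)) (hbdd : ∀ k x, |ψ k x| ≤ M)
    (hμ : ∀ᵐ x ∂μ, Tendsto (fun k => ψ k x) atTop (𝓝 (φ x)))
    (hν : ∀ᵐ x ∂ν, Tendsto (fun k => ψ k x) atTop (𝓝 (φ x))) :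
    Tendsto (fun k => dualObjective μ ν (ψ k)) atTop (𝓝 (dualObjective μ ν φ)) := by
  have hdom : ∀ κ : Measure S, [IsFiniteMeasure κ] →
      (∀ᵐ x ∂κ, Tendsto (fun k => ψ k x) atTop (𝓝 (φ x))) →
      Tendsto (fun k => ∫ x, ψ k x ∂κ) atTop (𝓝 (∫ x, φ x ∂κ)) := fun κ _ hκ =>
    tendsto_integral_of_dominated_convergence (fun _ => M)
      (fun k => (hmeas k).aestronglyMeasurable) (integrable_const M)
      (fun k => ae_of_all _ (hbdd k)) hκ
  exact (hdom μ hμ).sub (hdom ν hν)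

theorem exists_mem_admissibleBall_le_dualObjective [IsFiniteMeasure μ] [IsFiniteMeasure ν]
    {V : ℝ} (hV : ∀ t < V, ∃ ψ ∈ admissibleBall c M, t ≤ dualObjective μ ν ψ) :
    ∃ φ ∈ admissibleBall c M, V ≤ dualObjective μ ν φ := by
  set A : ℕ → Set (S → ℝ) :=
    fun n => {ψ | ψ ∈ admissibleBall c M ∧ V - 1 / (n + 1) ≤ dualObjective μ ν ψ}
  set K : ℕ → Set (Lp ℝ 2 (μ + ν)) := fun n => {g | ∃ ψ ∈ A n, g =ᵐ[μ + ν] ψ}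
  have hA_anti : Antitone A := fun n m hnm ψ hψ =>
    ⟨hψ.1, le_trans (by gcongr) hψ.2⟩
  have hK_ne : ∀ n, (K n).Nonempty := fun n => by
    obtain ⟨ψ, hψ, hψV⟩ := hV _ (sub_lt_self V Nat.one_div_pos_of_nat)
    have hmem : MemLp ψ 2 (μ + ν) :=
      MemLp.of_bound hψ.1.aestronglyMeasurable M (ae_of_all _ hψ.2.1)
    exact ⟨hmem.toLp, ψ, ⟨hψ, hψV⟩, hmem.coeFn_toLp⟩
  have hK_bdd : Bornology.IsBounded (K 0) := by
    refine isBounded_iff_forall_norm_le.2 ⟨_, fun g ⟨ψ, hψ, hgψ⟩ =>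
      Lp.norm_le_of_ae_bound (abs_nonneg M) ?_⟩
    filter_upwards [hgψ] with x hx
    exact hx ▸ (hψ.1.2.1 x).trans (le_abs_self M)
  have hK_anti : Antitone K := fun n m hnm g ⟨ψ, hψ, hgψ⟩ => ⟨ψ, hA_anti hnm hψ, hgψ⟩
  obtain ⟨v, hvK, hv⟩ := exists_cauchySeq_mem_of_antitone_convex hK_anti
    (fun n => Lp.convex_setOf_exists_mem_ae_eq (concaveOn_dualObjective.convex_ge _)) hK_ne hK_bdd
  obtain ⟨σ, hσ, hσv⟩ := Lp.exists_subseq_ae_tendsto_of_cauchySeq hv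
  choose ψ hψA hvψ using hvK
  obtain ⟨φ, hφ, hlim⟩ := exists_mem_admissibleBall_ae_tendsto (κ := μ + ν)
    (ψ := fun k => ψ (σ k)) (fun k => (hψA (σ k)).1) (by
      filter_upwards [hσv, ae_all_iff.2 hvψ] with x hx hxψ
      simpa only [hxψ] using hx)
  refine ⟨φ, hφ, le_of_tendsto_of_tendsto' ?_ (tendsto_dualObjective (fun k => (hψA (σ k)).1.1)
    (fun k => (hψA (σ k)).1.2.1) (ae_mono (Measure.le_add_right le_rfl) hlim)
    (ae_mono (Measure.le_add_left le_rfl) hlim)) fun k => (hψA (σ k)).2⟩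
  simpa using (tendsto_const_nhds (x := V)).sub
    (tendsto_one_div_add_atTop_nhds_zero_nat.comp hσ.tendsto_atTop)

end Admissible

theorem exists_one_variable_dual_maximizer_general
    {S : Type*} [MeasurableSpace S]
    (c : S × S → ℝ) (hc0 : ∀ p, 0 ≤ c p)
    (hcb : ∃ M : ℝ, ∀ p, c p ≤ M)
    (μ ν : Measure S) [IsProbabilityMeasure μ] [IsProbabilityMeasure ν] :
    ∃ φ : S → ℝ, Measurable φ ∧ (∃ M : ℝ, ∀ x, |φ x| ≤ M) ∧
      (∀ x y : S, φ x - φ y ≤ c (x, y)) ∧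
      ∫ x, φ x ∂μ - ∫ x, φ x ∂ν =
        ⨆ φ' : {φ' : S → ℝ // Measurable φ' ∧ (∃ M : ℝ, ∀ x, |φ' x| ≤ M) ∧
            ∀ x y : S, φ' x - φ' y ≤ c (x, y)},
          (∫ x, φ'.1 x ∂μ - ∫ x, φ'.1 x ∂ν) := by
  obtain ⟨M, hcM⟩ := hcb
  obtain ⟨x₀⟩ := Measure.nonempty_of_neZero μ
  have : Nonempty {φ // IsAdmissible c φ} := ⟨⟨0, isAdmissible_zero hc0⟩⟩
  have hbdd : BddAbove (Set.range fun φ : {φ // IsAdmissible c φ} => dualObjective μ ν φ) := by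
    refine ⟨2 * M, ?_⟩
    rintro _ ⟨φ, rfl⟩
    obtain ⟨ψ, hψ, hψφ⟩ := φ.2.exists_mem_admissibleBall (μ := μ) (ν := ν) hcM x₀
    exact hψφ.symm.trans_le (dualObjective_le_of_mem_admissibleBall hψ)
  obtain ⟨φ, hφ, hφV⟩ := exists_mem_admissibleBall_le_dualObjective (c := c) (M := M)
    (μ := μ) (ν := ν) (V := ⨆ φ : {φ // IsAdmissible c φ}, dualObjective μ ν φ) fun t ht => by
      obtain ⟨φ, hφt⟩ := exists_lt_of_lt_ciSup ht
      obtain ⟨ψ, hψ, hψφ⟩ := φ.2.exists_mem_admissibleBall (μ := μ) (ν := ν) hcM x₀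
      exact ⟨ψ, hψ, hψφ ▸ hφt.le⟩
  exact ⟨φ, hφ.1, ⟨M, hφ.2.1⟩, hφ.2.2,
    le_antisymm (le_ciSup hbdd ⟨φ, .of_mem_admissibleBall hφ⟩) hφV⟩

/-- For a bounded Borel measurable cost `c`, the one-variable Kantorovich dual problem
admits a maximizer. -/
theorem exists_one_variable_dual_maximizer
    {S : Type*} [TopologicalSpace S] [PolishSpace S] [MeasurableSpace S] [BorelSpace S]
    (c : S × S → ℝ) (hc : Measurable c) (hc0 : ∀ p, 0 ≤ c p)
    (hcb : ∃ M : ℝ, ∀ p, c p ≤ M)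
    (μ ν : Measure S) [IsProbabilityMeasure μ] [IsProbabilityMeasure ν] :
    ∃ φ : S → ℝ, Measurable φ ∧ (∃ M : ℝ, ∀ x, |φ x| ≤ M) ∧
      (∀ x y : S, φ x - φ y ≤ c (x, y)) ∧
      ∫ x, φ x ∂μ - ∫ x, φ x ∂ν =
        ⨆ φ' : {φ' : S → ℝ // Measurable φ' ∧ (∃ M : ℝ, ∀ x, |φ' x| ≤ M) ∧
            ∀ x y : S, φ' x - φ' y ≤ c (x, y)},
          (∫ x, φ'.1 x ∂μ - ∫ x, φ'.1 x ∂ν) :=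
  exists_one_variable_dual_maximizer_general c hc0 hcb μ ν
end

section
/- Let S be a Polish space, let R ⊆ S × S be any relation, let μ, ν be Borel probability measures on S, and let φ : S → [0,1] be Borel measurable with φ(x) − φ(y) ≤ 1 − 𝟏_R(x,y) for all x, y ∈ S. For t ∈ (0,1] set A_t := {x ∈ S : φ(x) ≥ t}. Then each A_t belongs to R*, the map t ↦ μ(A_t) − ν(A_t) satisfies ∫ φ dμ − ∫ φ dν = ∫_0^1 (μ(A_t) − ν(A_t)) dt, and consequently ∫ φ dμ − ∫ φ dν ≤ sup_{A ∈ R*} (μ(A) − ν(A)). -/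
/-!
The constraint forces `φ y ≥ φ x` whenever `(x, y) ∈ R`, so every super-level set of `φ` is
closed under `R`. The layer-cake formula writes `∫ φ dμ` as `∫₀¹ μ {t ≤ φ} dt` for each measure;
subtracting gives the identity, and bounding the integrand by the supremum over `R`-closed
Borel sets gives the inequality, since `(0, 1]` has length one.
-/

open MeasureTheory

lemma le_of_le_of_mem_of_sub_le_one_sub_indicator {S : Type*} {R : Set (S × S)} {φ : S → ℝ}
    (hconstr : ∀ x y : S, φ x - φ y ≤ 1 - Set.indicator R (fun _ => (1 : ℝ)) (x, y))
    {t : ℝ} {x y : S} (hx : t ≤ φ x) (hxy : (x, y) ∈ R) : t ≤ φ y := by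
  have h := hconstr x y
  rw [Set.indicator_of_mem hxy] at h
  linarith

section

variable {S : Type*} [MeasurableSpace S]

lemma integrableOn_Ioc_measureReal_superlevelSet (μ : Measure S) [IsFiniteMeasure μ]
    (φ : S → ℝ) (a b : ℝ) :
    IntegrableOn (fun t : ℝ => μ.real {x | t ≤ φ x}) (Set.Ioc a b) := by
  have hmeas : Measurable fun t : ℝ => μ.real {x | t ≤ φ x} :=
    (Antitone.measurable fun _ _ hst => measure_mono fun _ hx => hst.trans hx :
      Measurable fun t : ℝ => μ {x | t ≤ φ x}).ennreal_toReal
  refine Integrable.mono' (integrable_const (μ.real Set.univ)) hmeas.aestronglyMeasurable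
    (Filter.Eventually.of_forall fun t => ?_)
  rw [Real.norm_of_nonneg measureReal_nonneg]
  exact measureReal_mono (Set.subset_univ _)

lemma integral_sub_integral_eq_integral_Ioc_measureReal_superlevelSet
    (μ ν : Measure S) [IsFiniteMeasure μ] [IsFiniteMeasure ν]
    {φ : S → ℝ} (hφm : Measurable φ) (hφ0 : ∀ x, 0 ≤ φ x) (hφ1 : ∀ x, φ x ≤ 1) :
    ∫ x, φ x ∂μ - ∫ x, φ x ∂ν =
      ∫ t in Set.Ioc (0 : ℝ) 1, (μ.real {x | t ≤ φ x} - ν.real {x | t ≤ φ x}) := by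
  have layer_cake : ∀ (κ : Measure S) [IsFiniteMeasure κ],
      ∫ x, φ x ∂κ = ∫ t in Set.Ioc (0 : ℝ) 1, κ.real {x | t ≤ φ x} := fun κ _ =>
    Integrable.integral_eq_integral_Ioc_meas_le
      ((integrable_const (1 : ℝ)).mono' hφm.aestronglyMeasurable
        (Filter.Eventually.of_forall fun x => by
          rw [Real.norm_of_nonneg (hφ0 x)]; exact hφ1 x))
      (Filter.Eventually.of_forall hφ0) (Filter.Eventually.of_forall hφ1)
  rw [layer_cake μ, layer_cake ν, integral_sub
    (integrableOn_Ioc_measureReal_superlevelSet μ φ 0 1)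
    (integrableOn_Ioc_measureReal_superlevelSet ν φ 0 1)]

lemma bddAbove_range_measureReal_sub_measureReal {ι : Type*} (μ ν : Measure S)
    [IsFiniteMeasure μ] (A : ι → Set S) :
    BddAbove (Set.range fun i => μ.real (A i) - ν.real (A i)) :=
  ⟨μ.real Set.univ, Set.forall_mem_range.2 fun i =>
    (sub_le_self _ measureReal_nonneg).trans (measureReal_mono (Set.subset_univ _))⟩

end

lemma setIntegral_Ioc_zero_one_le {f : ℝ → ℝ} {M : ℝ} (hf : IntegrableOn f (Set.Ioc 0 1))
    (hle : ∀ t ∈ Set.Ioc (0 : ℝ) 1, f t ≤ M) :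
    ∫ t in Set.Ioc (0 : ℝ) 1, f t ≤ M :=
  calc ∫ t in Set.Ioc (0 : ℝ) 1, f t
      ≤ ∫ _ in Set.Ioc (0 : ℝ) 1, M :=
        setIntegral_mono_on hf (integrableOn_const (by simp)) measurableSet_Ioc hle
    _ = M := by simp

theorem layer_cake_indicator_conversion_general
    {S : Type*} [MeasurableSpace S]
    (R : Set (S × S))
    (μ ν : Measure S) [IsProbabilityMeasure μ] [IsProbabilityMeasure ν]
    (φ : S → ℝ) (hφm : Measurable φ) (hφ0 : ∀ x, 0 ≤ φ x) (hφ1 : ∀ x, φ x ≤ 1)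
    (hconstr : ∀ x y : S, φ x - φ y ≤ 1 - Set.indicator R (fun _ => (1 : ℝ)) (x, y)) :
    (∀ t : ℝ, t ∈ Set.Ioc (0 : ℝ) 1 →
      MeasurableSet {x : S | t ≤ φ x} ∧
        ∀ x y : S, x ∈ {x : S | t ≤ φ x} → (x, y) ∈ R → y ∈ {x : S | t ≤ φ x}) ∧
    (∫ x, φ x ∂μ - ∫ x, φ x ∂ν =
      ∫ t in Set.Ioc (0 : ℝ) 1,
        ((μ {x : S | t ≤ φ x}).toReal - (ν {x : S | t ≤ φ x}).toReal)) ∧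
    (∫ x, φ x ∂μ - ∫ x, φ x ∂ν ≤
      ⨆ A : {A : Set S // MeasurableSet A ∧ ∀ x y : S, x ∈ A → (x, y) ∈ R → y ∈ A},
        ((μ A.1).toReal - (ν A.1).toReal)) := by
  have superlevel_closed (t : ℝ) :
      MeasurableSet {x : S | t ≤ φ x} ∧
        ∀ x y : S, x ∈ {x : S | t ≤ φ x} → (x, y) ∈ R → y ∈ {x : S | t ≤ φ x} :=
    ⟨measurableSet_le measurable_const hφm,
      fun _ _ hx hxy => le_of_le_of_mem_of_sub_le_one_sub_indicator hconstr hx hxy⟩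
  have identity :=
    integral_sub_integral_eq_integral_Ioc_measureReal_superlevelSet μ ν hφm hφ0 hφ1
  refine ⟨fun t _ => superlevel_closed t, identity, ?_⟩
  rw [identity]
  exact setIntegral_Ioc_zero_one_le
    ((integrableOn_Ioc_measureReal_superlevelSet μ φ 0 1).sub
      (integrableOn_Ioc_measureReal_superlevelSet ν φ 0 1))
    fun t _ => le_ciSup (bddAbove_range_measureReal_sub_measureReal μ ν Subtype.val)
      ⟨{x | t ≤ φ x}, superlevel_closed t⟩

/-- Layer-cake conversion of a `[0,1]`-valued dual potential into indicator potentials: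
each super-level set `A_t` is a monotone Borel set, the dual objective of `φ` equals the
integral over `t ∈ (0,1]` of the objectives of the `A_t`, and hence is at most the
supremum of the objectives over monotone Borel sets. -/
theorem layer_cake_indicator_conversion
    {S : Type*} [TopologicalSpace S] [PolishSpace S] [MeasurableSpace S] [BorelSpace S]
    (R : Set (S × S))
    (μ ν : Measure S) [IsProbabilityMeasure μ] [IsProbabilityMeasure ν]
    (φ : S → ℝ) (hφm : Measurable φ) (hφ0 : ∀ x, 0 ≤ φ x) (hφ1 : ∀ x, φ x ≤ 1)
    (hconstr : ∀ x y : S, φ x - φ y ≤ 1 - Set.indicator R (fun _ => (1 : ℝ)) (x, y)) :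
    (∀ t : ℝ, t ∈ Set.Ioc (0 : ℝ) 1 →
      MeasurableSet {x : S | t ≤ φ x} ∧
        ∀ x y : S, x ∈ {x : S | t ≤ φ x} → (x, y) ∈ R → y ∈ {x : S | t ≤ φ x}) ∧
    (∫ x, φ x ∂μ - ∫ x, φ x ∂ν =
      ∫ t in Set.Ioc (0 : ℝ) 1,
        ((μ {x : S | t ≤ φ x}).toReal - (ν {x : S | t ≤ φ x}).toReal)) ∧
    (∫ x, φ x ∂μ - ∫ x, φ x ∂ν ≤
      ⨆ A : {A : Set S // MeasurableSet A ∧ ∀ x y : S, x ∈ A → (x, y) ∈ R → y ∈ A},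
        ((μ A.1).toReal - (ν A.1).toReal)) :=
  layer_cake_indicator_conversion_general R μ ν φ hφm hφ0 hφ1 hconstr
end

section
/- Let S = [0,2], let μ be Lebesgue measure restricted to [0,1] and ν Lebesgue measure restricted to [1,2] (both viewed as Borel probability measures on S), and let R := {(x,y) ∈ S × S : x = y or y > x + 1}. For ε ∈ (0,1), define T_ε : [0,1] → [1,2] by T_ε(x) := 1 + fract(x + ε), where fract denotes the fractional part, and let π_ε be the pushforward of μ under x ↦ (x, T_ε(x)). Then π_ε is a coupling of μ and ν with π_ε(R) = 1 − ε; consequently inf_{π ∈ Π(μ,ν)} (1 − π(R)) = 0. -/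
open Set MeasureTheory

/-- The relation of the counterexample: on `S = [0,2]`, `x R y` iff `x = y` or `y > x + 1`. -/
def counterexampleRel : Set (Icc (0 : ℝ) 2 × Icc (0 : ℝ) 2) :=
  {p | p.1 = p.2 ∨ (p.2 : ℝ) > (p.1 : ℝ) + 1}

/-- Lebesgue measure on `[0,1]`, viewed as a Borel probability measure on `[0,2]`. -/
noncomputable def muCounter : Measure (Icc (0 : ℝ) 2) :=
  (volume.restrict (Icc (0 : ℝ) 1)).comap Subtype.val

/-- Lebesgue measure on `[1,2]`, viewed as a Borel probability measure on `[0,2]`. -/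
noncomputable def nuCounter : Measure (Icc (0 : ℝ) 2) :=
  (volume.restrict (Icc (1 : ℝ) 2)).comap Subtype.val

/-- The map `T_ε(x) = 1 + fract (x + ε)`, as a map from `[0,2]` to `[0,2]`. -/
noncomputable def Tmap (ε : ℝ) (x : Icc (0 : ℝ) 2) : Icc (0 : ℝ) 2 :=
  ⟨1 + Int.fract ((x : ℝ) + ε), by
    constructor
    · have h := Int.fract_nonneg ((x : ℝ) + ε); linarith
    · have h := Int.fract_lt_one ((x : ℝ) + ε); linarith⟩

namespace CounterexampleAux

lemma he : MeasurableEmbedding (Subtype.val : Icc (0 : ℝ) 2 → ℝ) :=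
  MeasurableEmbedding.subtype_coe measurableSet_Icc

lemma hg_meas (ε : ℝ) : Measurable fun t : ℝ => 1 + Int.fract (t + ε) :=
  (measurable_fract.comp (measurable_add_const ε)).const_add 1

lemma hT_meas (ε : ℝ) : Measurable (Tmap ε) :=
  ((hg_meas ε).comp measurable_subtype_coe).subtype_mk

lemma hF_meas (ε : ℝ) : Measurable fun x : Icc (0 : ℝ) 2 => (x, Tmap ε x) :=
  measurable_id.prodMk (hT_meas ε)

lemma comap_map_val (ρ : Measure (Icc (0 : ℝ) 2)) :
    Measure.comap Subtype.val (ρ.map Subtype.val) = ρ := by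
  ext s hs
  rw [he.comap_apply, Measure.map_apply he.measurable (he.measurableSet_image.mpr hs),
    preimage_image_eq _ he.injective]

lemma map_val_mu : muCounter.map Subtype.val = volume.restrict (Icc (0 : ℝ) 1) := by
  rw [muCounter, he.map_comap, Subtype.range_coe,
    Measure.restrict_restrict measurableSet_Icc,
    inter_eq_self_of_subset_right (Icc_subset_Icc le_rfl one_le_two)]

lemma mu_prob : IsProbabilityMeasure muCounter := by
  constructor
  rw [muCounter, he.comap_apply, image_univ, Subtype.range_coe,
    Measure.restrict_apply' measurableSet_Icc,
    inter_eq_self_of_subset_right (Icc_subset_Icc le_rfl one_le_two), Real.volume_Icc]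
  norm_num

lemma inter_Icc_eq_Ico (A : Set ℝ) (a b : ℝ) :
    volume (A ∩ Icc a b) = volume (A ∩ Ico a b) := by
  apply le_antisymm
  · calc volume (A ∩ Icc a b) ≤ volume ((A ∩ Ico a b) ∪ {b}) := by
          apply measure_mono
          rintro x ⟨hxA, hxa, hxb⟩
          rcases eq_or_lt_of_le hxb with h | h
          · exact Or.inr (by simp [h])
          · exact Or.inl ⟨hxA, hxa, h⟩
        _ ≤ volume (A ∩ Ico a b) + volume {b} := measure_union_le _ _
        _ = volume (A ∩ Ico a b) := by simp
  · exact measure_mono (inter_subset_inter_right _ Ico_subset_Icc_self)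

lemma fract_map_volume {ε : ℝ} (h0 : 0 < ε) (h1 : ε < 1) :
    Measure.map (fun t : ℝ => 1 + Int.fract (t + ε)) (volume.restrict (Icc (0 : ℝ) 1))
      = volume.restrict (Icc (1 : ℝ) 2) := by
  have hg := hg_meas ε
  ext s hs
  rw [Measure.map_apply hg hs, Measure.restrict_apply' measurableSet_Icc,
    Measure.restrict_apply' measurableSet_Icc, inter_Icc_eq_Ico, inter_Icc_eq_Ico]
  have hsplit : Ico (0 : ℝ) 1 = Ico 0 (1 - ε) ∪ Ico (1 - ε) 1 :=
    (Ico_union_Ico_eq_Ico (by linarith) (by linarith)).symm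
  have hpiece1 : (fun t : ℝ => 1 + Int.fract (t + ε)) ⁻¹' s ∩ Ico 0 (1 - ε)
      = (fun t : ℝ => t + (1 + ε)) ⁻¹' (s ∩ Ico (1 + ε) 2) := by
    ext t
    simp only [mem_inter_iff, mem_preimage, mem_Ico]
    constructor
    · rintro ⟨hts, ht0, ht1⟩
      have hf : Int.fract (t + ε) = t + ε :=
        Int.fract_eq_self.mpr ⟨by linarith, by linarith⟩
      refine ⟨?_, by linarith, by linarith⟩
      rw [hf] at hts
      have heq : t + (1 + ε) = 1 + (t + ε) := by ring
      rw [heq]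
      exact hts
    · rintro ⟨hts, ht1, ht2⟩
      have hf : Int.fract (t + ε) = t + ε :=
        Int.fract_eq_self.mpr ⟨by linarith, by linarith⟩
      refine ⟨?_, by linarith, by linarith⟩
      show 1 + Int.fract (t + ε) ∈ s
      rw [hf]
      have heq : 1 + (t + ε) = t + (1 + ε) := by ring
      rw [heq]
      exact hts
  have hpiece2 : (fun t : ℝ => 1 + Int.fract (t + ε)) ⁻¹' s ∩ Ico (1 - ε) 1
      = (fun t : ℝ => t + ε) ⁻¹' (s ∩ Ico 1 (1 + ε)) := by
    have hf : ∀ t : ℝ, 1 - ε ≤ t → t < 1 → Int.fract (t + ε) = t + ε - 1 := by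
      intro t h h'
      have : t + ε = (t + ε - 1) + 1 := by ring
      rw [this, Int.fract_add_one, Int.fract_eq_self.mpr ⟨by linarith, by linarith⟩]
      ring
    ext t
    simp only [mem_inter_iff, mem_preimage, mem_Ico]
    constructor
    · rintro ⟨hts, ht0, ht1⟩
      rw [hf t ht0 ht1] at hts
      refine ⟨?_, by linarith, by linarith⟩
      have heq : t + ε = 1 + (t + ε - 1) := by ring
      rw [heq]
      exact hts
    · rintro ⟨hts, ht1, ht2⟩
      have ht0 : 1 - ε ≤ t := by linarith
      have ht1' : t < 1 := by linarith
      refine ⟨?_, ht0, ht1'⟩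
      show 1 + Int.fract (t + ε) ∈ s
      rw [hf t ht0 ht1']
      have heq : 1 + (t + ε - 1) = t + ε := by ring
      rw [heq]
      exact hts
  rw [hsplit, inter_union_distrib_left,
    measure_union (Ico_disjoint_Ico_same.mono inter_subset_right inter_subset_right)
      (((hg_meas ε) hs).inter measurableSet_Ico),
    hpiece1, hpiece2, measure_preimage_add_right, measure_preimage_add_right, add_comm,
    ← measure_union (Ico_disjoint_Ico_same.mono inter_subset_right inter_subset_right)
      (hs.inter measurableSet_Ico),
    ← inter_union_distrib_left, Ico_union_Ico_eq_Ico (by linarith) (by linarith)]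

lemma hR_meas : MeasurableSet counterexampleRel := by
  have : counterexampleRel
      = {p : Icc (0 : ℝ) 2 × Icc (0 : ℝ) 2 | (p.1 : ℝ) = (p.2 : ℝ)}
        ∪ {p : Icc (0 : ℝ) 2 × Icc (0 : ℝ) 2 | (p.1 : ℝ) + 1 < (p.2 : ℝ)} := by
    ext p
    simp [counterexampleRel, Subtype.ext_iff]
  rw [this]
  exact (measurableSet_eq_fun (measurable_subtype_coe.comp measurable_fst)
      (measurable_subtype_coe.comp measurable_snd)).union
    (measurableSet_lt ((measurable_subtype_coe.comp measurable_fst).add_const 1)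
      (measurable_subtype_coe.comp measurable_snd))

lemma main_part (ε : ℝ) (hε : ε ∈ Set.Ioo (0 : ℝ) 1) :
    IsProbabilityMeasure (muCounter.map (fun x => (x, Tmap ε x))) ∧
      (muCounter.map (fun x => (x, Tmap ε x))).map Prod.fst = muCounter ∧
      (muCounter.map (fun x => (x, Tmap ε x))).map Prod.snd = nuCounter ∧
      (muCounter.map (fun x => (x, Tmap ε x))) counterexampleRel
        = ENNReal.ofReal (1 - ε) := by
  obtain ⟨h0, h1⟩ := hε
  haveI := mu_prob
  refine ⟨Measure.isProbabilityMeasure_map (hF_meas ε).aemeasurable, ?_, ?_, ?_⟩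
  · rw [Measure.map_map measurable_fst (hF_meas ε)]
    exact Measure.map_id
  · rw [Measure.map_map measurable_snd (hF_meas ε)]
    have hcomp : (Prod.snd ∘ fun x : Icc (0 : ℝ) 2 => (x, Tmap ε x)) = Tmap ε := rfl
    rw [hcomp]
    have hval : (muCounter.map (Tmap ε)).map Subtype.val = volume.restrict (Icc (1 : ℝ) 2) := by
      rw [Measure.map_map measurable_subtype_coe (hT_meas ε)]
      have : (Subtype.val ∘ Tmap ε)
          = (fun t : ℝ => 1 + Int.fract (t + ε)) ∘ (Subtype.val : Icc (0:ℝ) 2 → ℝ) := rfl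
      rw [this, ← Measure.map_map (hg_meas ε) measurable_subtype_coe, map_val_mu,
        fract_map_volume h0 h1]
    calc muCounter.map (Tmap ε)
        = Measure.comap Subtype.val ((muCounter.map (Tmap ε)).map Subtype.val) :=
          (comap_map_val _).symm
      _ = nuCounter := by rw [hval, nuCounter]
  · rw [Measure.map_apply (hF_meas ε) hR_meas, muCounter, he.comap_apply,
      Measure.restrict_apply' measurableSet_Icc]
    have himg : Subtype.val '' ((fun x => (x, Tmap ε x)) ⁻¹' counterexampleRel) ∩ Icc 0 1
        = Ico (0 : ℝ) (1 - ε) := by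
      ext t
      constructor
      · rintro ⟨⟨x, hx, rfl⟩, ht0, ht1⟩
        have hx' : (x : ℝ) = 1 + Int.fract ((x : ℝ) + ε)
            ∨ 1 + Int.fract ((x : ℝ) + ε) > (x : ℝ) + 1 := by
          rcases hx with h | h
          · exact Or.inl (congrArg Subtype.val h)
          · exact Or.inr h
        refine ⟨ht0, ?_⟩
        by_contra hcon
        push_neg at hcon
        -- so 1 - ε ≤ x ≤ 1, hence fract (x + ε) = x + ε - 1
        have hfr : Int.fract ((x : ℝ) + ε) = (x : ℝ) + ε - 1 := by
          have h' : (x : ℝ) + ε = ((x : ℝ) + ε - 1) + 1 := by ring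
          rw [h', Int.fract_add_one, Int.fract_eq_self.mpr ⟨by linarith, by linarith⟩]
          ring
        rcases hx' with h | h
        · rw [hfr] at h; linarith
        · rw [hfr] at h; linarith
      · rintro ⟨ht0, ht1⟩
        have htmem : t ∈ Icc (0 : ℝ) 2 := ⟨ht0, by linarith⟩
        have hfr : Int.fract (t + ε) = t + ε :=
          Int.fract_eq_self.mpr ⟨by linarith, by linarith⟩
        refine ⟨⟨⟨t, htmem⟩, Or.inr ?_, rfl⟩, ht0, by linarith⟩
        show (1 : ℝ) + Int.fract (t + ε) > t + 1
        rw [hfr]; linarith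
    rw [himg, Real.volume_Ico, sub_zero]

end CounterexampleAux

/-- For every `ε ∈ (0,1)`, the pushforward `π_ε` of `μ` under `x ↦ (x, T_ε x)` is a
coupling of `μ` and `ν` with `π_ε R = 1 - ε`; consequently the infimum of `1 - π R`
over all couplings `π` of `μ, ν` equals `0`. -/
theorem counterexample_primal_value_zero :
    (∀ ε : ℝ, ε ∈ Set.Ioo (0 : ℝ) 1 →
      IsProbabilityMeasure (muCounter.map (fun x => (x, Tmap ε x))) ∧
      (muCounter.map (fun x => (x, Tmap ε x))).map Prod.fst = muCounter ∧
      (muCounter.map (fun x => (x, Tmap ε x))).map Prod.snd = nuCounter ∧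
      (muCounter.map (fun x => (x, Tmap ε x))) counterexampleRel
        = ENNReal.ofReal (1 - ε)) ∧
    (⨅ π : {π : Measure (Icc (0 : ℝ) 2 × Icc (0 : ℝ) 2) // IsProbabilityMeasure π ∧
        π.map Prod.fst = muCounter ∧ π.map Prod.snd = nuCounter},
      (1 - (π.1 counterexampleRel).toReal)) = 0 := by
  refine ⟨CounterexampleAux.main_part, ?_⟩
  set P := {π : Measure (Icc (0 : ℝ) 2 × Icc (0 : ℝ) 2) // IsProbabilityMeasure π ∧
      π.map Prod.fst = muCounter ∧ π.map Prod.snd = nuCounter} with hP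
  have hnonneg : ∀ π : P, (0 : ℝ) ≤ 1 - (π.1 counterexampleRel).toReal := by
    intro π
    haveI := π.2.1
    have h1 : π.1 counterexampleRel ≤ 1 := prob_le_one
    have h2 : (π.1 counterexampleRel).toReal ≤ (1 : ENNReal).toReal :=
      ENNReal.toReal_mono ENNReal.one_ne_top h1
    simp only [ENNReal.toReal_one] at h2
    linarith
  have hbdd : BddBelow (Set.range fun π : P => 1 - (π.1 counterexampleRel).toReal) := by
    refine ⟨0, ?_⟩
    rintro x ⟨π, rfl⟩
    exact hnonneg π
  have elt : ∀ ε : ℝ, ε ∈ Set.Ioo (0 : ℝ) 1 → ∃ π : P,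
      1 - (π.1 counterexampleRel).toReal = ε := by
    intro ε hε
    obtain ⟨hprob, hfst, hsnd, hval⟩ := CounterexampleAux.main_part ε hε
    refine ⟨⟨muCounter.map (fun x => (x, Tmap ε x)), hprob, hfst, hsnd⟩, ?_⟩
    simp only [hval, ENNReal.toReal_ofReal (by linarith [hε.2] : (0:ℝ) ≤ 1 - ε)]
    ring
  haveI : Nonempty P := by
    obtain ⟨π, -⟩ := elt (1/2) (by norm_num)
    exact ⟨π⟩
  apply le_antisymm
  · apply le_of_forall_pos_le_add
    intro δ hδ
    have hε : min δ (1/2) ∈ Set.Ioo (0 : ℝ) 1 :=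
      ⟨lt_min hδ (by norm_num), lt_of_le_of_lt (min_le_right _ _) (by norm_num)⟩
    obtain ⟨π, hπ⟩ := elt _ hε
    calc (⨅ π : P, (1 - (π.1 counterexampleRel).toReal))
        ≤ 1 - (π.1 counterexampleRel).toReal := ciInf_le hbdd π
      _ = min δ (1/2) := hπ
      _ ≤ 0 + δ := by simp [min_le_left δ (1/2)]
  · exact le_ciInf hnonneg
end

section
/- Let S = [0,2], let μ be Lebesgue measure restricted to [0,1] and ν Lebesgue measure restricted to [1,2] (both viewed as Borel probability measures on S), and let R := {(x,y) ∈ S × S : x = y or y > x + 1}. Then there is no coupling π of μ and ν with π(R) = 1; that is, every π ∈ Π(μ,ν) satisfies π(R) < 1. -/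
open Set MeasureTheory

lemma map_muCounter : muCounter.map Subtype.val = volume.restrict (Icc (0 : ℝ) 1) := by
  rw [muCounter, (MeasurableEmbedding.subtype_coe measurableSet_Icc).map_comap,
    Subtype.range_coe, Measure.restrict_restrict measurableSet_Icc,
    inter_eq_self_of_subset_right (Icc_subset_Icc le_rfl one_le_two)]

lemma map_nuCounter : nuCounter.map Subtype.val = volume.restrict (Icc (1 : ℝ) 2) := by
  rw [nuCounter, (MeasurableEmbedding.subtype_coe measurableSet_Icc).map_comap,
    Subtype.range_coe, Measure.restrict_restrict measurableSet_Icc,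
    inter_eq_self_of_subset_right (Icc_subset_Icc zero_le_one le_rfl)]

lemma integral_muCounter : ∫ x, (x : ℝ) ∂muCounter = 1/2 := by
  have h := (MeasurableEmbedding.subtype_coe (measurableSet_Icc
    (a := (0:ℝ)) (b := 2))).integral_map (μ := muCounter) (g := fun x : ℝ => x)
  rw [map_muCounter] at h
  rw [← h, MeasureTheory.integral_Icc_eq_integral_Ioc,
    ← intervalIntegral.integral_of_le zero_le_one, integral_id]
  norm_num

lemma integral_nuCounter : ∫ y, (y : ℝ) ∂nuCounter = 3/2 := by
  have h := (MeasurableEmbedding.subtype_coe (measurableSet_Icc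
    (a := (0:ℝ)) (b := 2))).integral_map (μ := nuCounter) (g := fun x : ℝ => x)
  rw [map_nuCounter] at h
  rw [← h, MeasureTheory.integral_Icc_eq_integral_Ioc,
    ← intervalIntegral.integral_of_le one_le_two, integral_id]
  norm_num

lemma muCounter_gt_one : muCounter {x : Icc (0:ℝ) 2 | 1 < (x:ℝ)} = 0 := by
  rw [muCounter, (MeasurableEmbedding.subtype_coe measurableSet_Icc).comap_apply]
  refine measure_mono_null (t := Ioi 1) ?_ ?_
  · rintro x ⟨y, hy, rfl⟩; exact hy
  · rw [Measure.restrict_apply' measurableSet_Icc]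
    convert measure_empty
    · ext x; simp only [mem_inter_iff, mem_Ioi, mem_Icc, mem_empty_iff_false, iff_false]
      rintro ⟨h1, _, h2⟩; linarith
    · infer_instance

lemma muCounter_eq_one : muCounter {x : Icc (0:ℝ) 2 | (x:ℝ) = 1} = 0 := by
  rw [muCounter, (MeasurableEmbedding.subtype_coe measurableSet_Icc).comap_apply]
  refine measure_mono_null (t := {(1:ℝ)}) ?_ ?_
  · rintro x ⟨y, hy, rfl⟩; exact hy
  · rw [Measure.restrict_apply' measurableSet_Icc]
    exact measure_mono_null inter_subset_left (by simp)

lemma nuCounter_lt_one : nuCounter {y : Icc (0:ℝ) 2 | (y:ℝ) < 1} = 0 := by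
  rw [nuCounter, (MeasurableEmbedding.subtype_coe measurableSet_Icc).comap_apply]
  refine measure_mono_null (t := Iio 1) ?_ ?_
  · rintro x ⟨y, hy, rfl⟩; exact hy
  · rw [Measure.restrict_apply' measurableSet_Icc]
    convert measure_empty
    · ext x; simp only [mem_inter_iff, mem_Iio, mem_Icc, mem_empty_iff_false, iff_false]
      rintro ⟨h1, h2, _⟩; linarith
    · infer_instance

/-- No coupling of `μ` (Lebesgue on `[0,1]`) and `ν` (Lebesgue on `[1,2]`) gives full
mass to the relation `R = {(x,y) : x = y or y > x + 1}`: every coupling satisfies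
`π R < 1`. -/
theorem counterexample_no_primal_minimizer :
    ∀ π : Measure (Icc (0 : ℝ) 2 × Icc (0 : ℝ) 2), IsProbabilityMeasure π →
      π.map Prod.fst = muCounter → π.map Prod.snd = nuCounter →
      π counterexampleRel < 1 := by
  intro π hπ h1 h2
  refine lt_of_le_of_ne prob_le_one ?_
  intro hR
  have hval : Continuous (fun x : Icc (0:ℝ) 2 => (x:ℝ)) := continuous_subtype_val
  have hx : Measurable (fun p : Icc (0:ℝ) 2 × Icc (0:ℝ) 2 => (p.1 : ℝ)) := (hval.comp continuous_fst).measurable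
  have hy : Measurable (fun p : Icc (0:ℝ) 2 × Icc (0:ℝ) 2 => (p.2 : ℝ)) := (hval.comp continuous_snd).measurable
  have key1 : ∀ A : Set (Icc (0:ℝ) 2), MeasurableSet A → muCounter A = 0 → π (Prod.fst ⁻¹' A) = 0 := by
    intro A hA h0
    rw [← Measure.map_apply measurable_fst hA, h1]; exact h0
  have key2 : ∀ A : Set (Icc (0:ℝ) 2), MeasurableSet A → nuCounter A = 0 → π (Prod.snd ⁻¹' A) = 0 := by
    intro A hA h0
    rw [← Measure.map_apply measurable_snd hA, h2]; exact h0
  have hm1 : MeasurableSet {x : Icc (0:ℝ) 2 | 1 < (x:ℝ)} := measurableSet_lt measurable_const hval.measurable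
  have hm2 : MeasurableSet {y : Icc (0:ℝ) 2 | (y:ℝ) < 1} := measurableSet_lt hval.measurable measurable_const
  have hm3 : MeasurableSet {x : Icc (0:ℝ) 2 | (x:ℝ) = 1} := hval.measurable (measurableSet_singleton 1)
  have hdiag : π {p : Icc (0:ℝ) 2 × Icc (0:ℝ) 2 | p.1 = p.2} = 0 := by
    have hsub : {p : Icc (0:ℝ) 2 × Icc (0:ℝ) 2 | p.1 = p.2} ⊆
        ((Prod.fst ⁻¹' {x : Icc (0:ℝ) 2 | 1 < (x:ℝ)}) ∪ (Prod.snd ⁻¹' {y : Icc (0:ℝ) 2 | (y:ℝ) < 1})) ∪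
          (Prod.fst ⁻¹' {x : Icc (0:ℝ) 2 | (x:ℝ) = 1}) := by
      intro p hp
      rcases lt_trichotomy ((p.1:ℝ)) 1 with h|h|h
      · refine Or.inl (Or.inr ?_)
        have : ((p.2:ℝ)) = ((p.1:ℝ)) := by rw [hp]
        simpa [Set.mem_preimage, this] using h
      · exact Or.inr h
      · exact Or.inl (Or.inl h)
    refine measure_mono_null hsub (measure_union_null (measure_union_null ?_ ?_) ?_)
    · exact key1 _ hm1 muCounter_gt_one
    · exact key2 _ hm2 nuCounter_lt_one
    · exact key1 _ hm3 muCounter_eq_one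
  set G : Set (Icc (0:ℝ) 2 × Icc (0:ℝ) 2) := {p : Icc (0:ℝ) 2 × Icc (0:ℝ) 2 | (p.1:ℝ) + 1 < (p.2:ℝ)} with hGdef
  have hGm : MeasurableSet G := measurableSet_lt (hx.add_const 1) hy
  have hG1 : π G = 1 := by
    refine le_antisymm prob_le_one ?_
    calc (1 : ENNReal) = π counterexampleRel := hR.symm
      _ ≤ π ({p : Icc (0:ℝ) 2 × Icc (0:ℝ) 2 | p.1 = p.2} ∪ G) := by
          refine measure_mono ?_
          rintro p (h|h)
          · exact Or.inl h
          · exact Or.inr h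
      _ ≤ π {p : Icc (0:ℝ) 2 × Icc (0:ℝ) 2 | p.1 = p.2} + π G := measure_union_le _ _
      _ = π G := by rw [hdiag, zero_add]
  have hae : ∀ᵐ p ∂π, (p.1:ℝ) + 1 < (p.2:ℝ) := by
    rw [ae_iff]
    have : {p : Icc (0:ℝ) 2 × Icc (0:ℝ) 2 | ¬ (p.1:ℝ) + 1 < (p.2:ℝ)} = Gᶜ := by
      ext p; simp [hGdef]
    rw [this, (prob_compl_eq_zero_iff hGm)]
    exact hG1
  have hIy : Integrable (fun p : Icc (0:ℝ) 2 × Icc (0:ℝ) 2 => (p.2:ℝ)) π := by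
    refine (integrable_const (2:ℝ)).mono' hy.aestronglyMeasurable ?_
    filter_upwards with p
    rw [Real.norm_eq_abs, abs_of_nonneg p.2.2.1]
    exact p.2.2.2
  have hIx : Integrable (fun p : Icc (0:ℝ) 2 × Icc (0:ℝ) 2 => (p.1:ℝ)) π := by
    refine (integrable_const (2:ℝ)).mono' hx.aestronglyMeasurable ?_
    filter_upwards with p
    rw [Real.norm_eq_abs, abs_of_nonneg p.1.2.1]
    exact p.1.2.2
  have hEx : ∫ p, ((p.1:ℝ)) ∂π = 1/2 := by
    rw [← integral_muCounter, ← h1,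
      integral_map measurable_fst.aemeasurable hval.measurable.aestronglyMeasurable]
  have hEy : ∫ p, ((p.2:ℝ)) ∂π = 3/2 := by
    rw [← integral_nuCounter, ← h2,
      integral_map measurable_snd.aemeasurable hval.measurable.aestronglyMeasurable]
  have hI2 : Integrable (fun p : Icc (0:ℝ) 2 × Icc (0:ℝ) 2 => (p.2:ℝ) - (p.1:ℝ)) π :=
    hIy.sub hIx
  have hI3 : Integrable (fun p : Icc (0:ℝ) 2 × Icc (0:ℝ) 2 => (p.2:ℝ) - (p.1:ℝ) - 1) π :=
    hI2.sub (integrable_const 1)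
  have hsum : ∫ p, ((p.2:ℝ) - (p.1:ℝ) - 1) ∂π = 0 := by
    rw [integral_sub hI2 (integrable_const 1), integral_sub hIy hIx, hEx, hEy,
      integral_const]
    simp
    norm_num
  have hnn : 0 ≤ᵐ[π] fun p : Icc (0:ℝ) 2 × Icc (0:ℝ) 2 => (p.2:ℝ) - (p.1:ℝ) - 1 :=
    hae.mono fun p hp => by simp only [Pi.zero_apply]; linarith
  have hzero : (fun p : Icc (0:ℝ) 2 × Icc (0:ℝ) 2 => (p.2:ℝ) - (p.1:ℝ) - 1) =ᵐ[π] 0 :=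
    (integral_eq_zero_iff_of_nonneg_ae hnn hI3).1 hsum
  haveI : (ae π).NeBot := ae_neBot.2 hπ.ne_zero
  obtain ⟨p, h0, hp⟩ := (hzero.and hae).exists
  simp only [Pi.zero_apply] at h0
  linarith
end
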